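/- Let Q be the equioriented A_n quiver and d a dimension vector with d_0 = d_{n+1} = 0. Define m_{ij} = [min{d_k − d_{i-1}, d_k − d_{j+1} : i ≤ k ≤ j}]_+ for 1 ≤ i ≤ j ≤ n, and let V = ⊕_{i≤j} U_{i,j}^{m_{ij}}. Then for all 1 ≤ i ≤ j ≤ n, the rank r_{ij}(V) of the composite map V_i → V_j in V equals min{d_i, ..., d_j}. -/

import Mathlib

/-- The piecewise-linear multiplicity `m_{ij} = [min {min (d_k - d_{i-1}) (d_k - d_{j+1}) :
i ≤ k ≤ j}]₊` for the rigid representation of the equioriented `Aₙ` quiver. -/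
noncomputable def rigidMult (d : ℕ → ℤ) (i j : ℕ) : ℕ :=
  (max (sInf {x : ℤ | ∃ k, i ≤ k ∧ k ≤ j ∧
    x = min (d k - d (i - 1)) (d k - d (j + 1))}) 0).toNat

/-- The dimension at vertex `l` of the component of `⊕ U_{i,j}^{m_{ij}}` indexed by the
interval `p = (i, j)`: `m_{ij}` if `i ≤ l ≤ j`, else `0`. -/
noncomputable def compDim (d : ℕ → ℤ) (l : ℕ) (p : ℕ × ℕ) : ℕ :=
  if p.1 ≤ l ∧ l ≤ p.2 then rigidMult d p.1 p.2 else 0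

/-- The space at vertex `l` of the representation `V = ⊕_{1 ≤ i ≤ j ≤ n} U_{i,j}^{m_{ij}}`. -/
def rigidSpace (K : Type) [Field K] (n : ℕ) (d : ℕ → ℤ) (l : ℕ) : Type :=
  ∀ p : ↥(Finset.Icc 1 n ×ˢ Finset.Icc 1 n), Fin (compDim d l p) → K

noncomputable instance (K : Type) [Field K] (n : ℕ) (d : ℕ → ℤ) (l : ℕ) :
    AddCommGroup (rigidSpace K n d l) := by unfold rigidSpace; infer_instance

noncomputable instance (K : Type) [Field K] (n : ℕ) (d : ℕ → ℤ) (l : ℕ) :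
    Module K (rigidSpace K n d l) := by unfold rigidSpace; infer_instance

/-- The "rectangular identity" linear map `K^a → K^b`. -/
noncomputable def rectMap (K : Type) [Field K] (a b : ℕ) :
    (Fin a → K) →ₗ[K] (Fin b → K) :=
  Matrix.mulVecLin (Matrix.of fun (p : Fin b) (q : Fin a) =>
    if (p : ℕ) = (q : ℕ) then (1 : K) else 0)

/-- The structure map `V_l → V_{l+1}` of `⊕ U_{i,j}^{m_{ij}}`: componentwise the
identity on intervals containing both `l` and `l+1`, zero otherwise. -/
noncomputable def rigidStructMap (K : Type) [Field K] (n : ℕ) (d : ℕ → ℤ) (l : ℕ) :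
    rigidSpace K n d l →ₗ[K] rigidSpace K n d (l + 1) :=
  LinearMap.pi fun p =>
    (rectMap K (compDim d l p) (compDim d (l + 1) p)).comp (LinearMap.proj p)

/-!
Summand by summand, the composite `V_i → V_j` is the identity on `U_{a,b}^{m_{ab}}` when
`[i, j] ⊆ [a, b]` and zero otherwise, so its rank is `∑_{a ≤ i, j ≤ b} m_{ab}`. Writing
`M(a, b) = min {d_a, …, d_b}`, one has `m_{ab} = [M(a, b) - max (d_{a-1}) (d_{b+1})]₊`, which is the
mixed second difference `M(a, b) - M(a-1, b) - M(a, b+1) + M(a-1, b+1)`. Hence the double sum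
telescopes to `M(i, j) - M(0, j) - M(i, n+1) + M(0, n+1) = M(i, j)`, as `d ≥ 0 = d_0 = d_{n+1}`.
-/

open Finset Module LinearMap

section Telescoping

variable {M : Type*} [AddCommGroup M]

lemma sum_Icc_sub_succ (f : ℕ → M) {j n : ℕ} (h : j ≤ n + 1) :
    ∑ b ∈ Icc j n, (f b - f (b + 1)) = f j - f (n + 1) := by
  rw [← Ico_add_one_right_eq_Icc, ← neg_sub, ← sum_Ico_sub f h, ← sum_neg_distrib]
  simp only [neg_sub]

lemma sum_Icc_one_sub_pred (f : ℕ → M) (i : ℕ) :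
    ∑ a ∈ Icc 1 i, (f a - f (a - 1)) = f i - f 0 := by
  induction i with
  | zero => simp
  | succ i ih => rw [sum_Icc_succ_top (by omega), ih, Nat.add_sub_cancel]; abel

lemma sum_Icc_sum_Icc_mixed_diff (F : ℕ → ℕ → M) (i : ℕ) {j n : ℕ} (h : j ≤ n + 1) :
    ∑ a ∈ Icc 1 i, ∑ b ∈ Icc j n, (F a b - F (a - 1) b - F a (b + 1) + F (a - 1) (b + 1)) =
      F i j - F 0 j - F i (n + 1) + F 0 (n + 1) := by
  have inner : ∀ a, ∑ b ∈ Icc j n, (F a b - F (a - 1) b - F a (b + 1) + F (a - 1) (b + 1)) =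
      (F a j - F a (n + 1)) - (F (a - 1) j - F (a - 1) (n + 1)) := fun a => by
    calc _ = ∑ b ∈ Icc j n, ((F a b - F (a - 1) b) - (F a (b + 1) - F (a - 1) (b + 1))) :=
          sum_congr rfl fun b _ => by abel
      _ = _ := by rw [sum_Icc_sub_succ (fun b => F a b - F (a - 1) b) h]; abel
  simp only [inner, sum_Icc_one_sub_pred (fun a => F a j - F a (n + 1))]
  abel

end Telescoping

section IntervalMin

variable (d : ℕ → ℤ)

noncomputable def intervalMin (a b : ℕ) : ℤ :=
  if h : a ≤ b then (Icc a b).inf' (nonempty_Icc.mpr h) d else 0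

variable {d}

lemma intervalMin_of_le {a b : ℕ} (h : a ≤ b) :
    intervalMin d a b = (Icc a b).inf' (nonempty_Icc.mpr h) d :=
  dif_pos h

lemma intervalMin_le {a b k : ℕ} (hak : a ≤ k) (hkb : k ≤ b) : intervalMin d a b ≤ d k := by
  rw [intervalMin_of_le (hak.trans hkb)]
  exact inf'_le _ (mem_Icc.mpr ⟨hak, hkb⟩)

lemma intervalMin_nonneg (hd : ∀ k, 0 ≤ d k) (a b : ℕ) : 0 ≤ intervalMin d a b := by
  unfold intervalMin
  split
  · exact le_inf' _ _ fun k _ => hd k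
  · exact le_rfl

lemma intervalMin_eq_zero (hd : ∀ k, 0 ≤ d k) {a b k : ℕ} (hak : a ≤ k) (hkb : k ≤ b)
    (hk : d k = 0) : intervalMin d a b = 0 :=
  le_antisymm (hk ▸ intervalMin_le hak hkb) (intervalMin_nonneg hd a b)

lemma intervalMin_sub_one_left {a b : ℕ} (h : a ≤ b) :
    intervalMin d (a - 1) b = min (d (a - 1)) (intervalMin d a b) := by
  rw [intervalMin_of_le (by omega), intervalMin_of_le h]
  exact inf'_congr _ (insert_Icc_left_eq_Icc_sub_one (by omega)).symm (fun _ _ => rfl) |>.trans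
    (inf'_insert _ _)

lemma intervalMin_add_one_right {a b : ℕ} (h : a ≤ b) :
    intervalMin d a (b + 1) = min (intervalMin d a b) (d (b + 1)) := by
  rw [intervalMin_of_le (by omega), intervalMin_of_le h, min_comm]
  exact inf'_congr _ (insert_Icc_right_eq_Icc_add_one (by omega)).symm (fun _ _ => rfl) |>.trans
    (inf'_insert _ _)

end IntervalMin

section Multiplicity

variable {d : ℕ → ℤ}

lemma rigidMult_eq_max {a b : ℕ} (h : a ≤ b) :
    (rigidMult d a b : ℤ) = max (intervalMin d a b - max (d (a - 1)) (d (b + 1))) 0 := by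
  have hne : (Icc a b).Nonempty := nonempty_Icc.mpr h
  have hset : {x : ℤ | ∃ k, a ≤ k ∧ k ≤ b ∧ x = min (d k - d (a - 1)) (d k - d (b + 1))} =
      (fun k => d k - max (d (a - 1)) (d (b + 1))) '' ↑(Icc a b) := by
    ext x
    simp [min_sub_sub_left, eq_comm, and_assoc]
  have hshift (c : ℤ) : (Icc a b).inf' hne (fun k => d k - c) = (Icc a b).inf' hne d - c :=
    (map_finset_inf' (OrderIso.subRight c) hne d).symm
  rw [rigidMult, hset, ← inf'_eq_csInf_image _ hne, hshift, intervalMin_of_le h,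
    Int.toNat_of_nonneg (le_max_right _ _)]

lemma rigidMult_eq_mixed_diff {a b : ℕ} (h : a ≤ b) :
    (rigidMult d a b : ℤ) = intervalMin d a b - intervalMin d (a - 1) b -
      intervalMin d a (b + 1) + intervalMin d (a - 1) (b + 1) := by
  rw [rigidMult_eq_max h, intervalMin_sub_one_left (by omega : a ≤ b + 1),
    intervalMin_sub_one_left h, intervalMin_add_one_right h]
  omega

lemma sum_rigidMult (hd : ∀ k, 0 ≤ d k) (h0 : d 0 = 0) {n : ℕ} (hn : d (n + 1) = 0)
    {i j : ℕ} (hij : i ≤ j) (hjn : j ≤ n) :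
    ∑ a ∈ Icc 1 i, ∑ b ∈ Icc j n, (rigidMult d a b : ℤ) = intervalMin d i j := by
  have hsum := sum_Icc_sum_Icc_mixed_diff (intervalMin d) i (by omega : j ≤ n + 1)
  rw [intervalMin_eq_zero hd (le_refl 0) (Nat.zero_le j) h0,
    intervalMin_eq_zero hd (by omega : i ≤ n + 1) le_rfl hn,
    intervalMin_eq_zero hd (le_refl 0) (Nat.zero_le _) h0, sub_zero, sub_zero, add_zero] at hsum
  rw [← hsum]
  refine sum_congr rfl fun a ha => sum_congr rfl fun b hb => ?_
  rw [mem_Icc] at ha hb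
  exact rigidMult_eq_mixed_diff (by omega)

end Multiplicity

section TruncMap

variable (R : Type*) [Semiring R]

def truncMap (m a b : ℕ) : (Fin a → R) →ₗ[R] (Fin b → R) where
  toFun x q := if h : (q : ℕ) < min m a then x ⟨q, h.trans_le (min_le_right m a)⟩ else 0
  map_add' x y := by
    funext q
    simp only [Pi.add_apply]
    split <;> simp
  map_smul' c x := by
    funext q
    simp only [Pi.smul_apply, RingHom.id_apply]
    split <;> simp

variable {R}

lemma truncMap_apply (m a b : ℕ) (x : Fin a → R) (q : Fin b) :
    truncMap R m a b x q =
      if h : (q : ℕ) < min m a then x ⟨q, h.trans_le (min_le_right m a)⟩ else 0 :=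
  rfl

lemma truncMap_congr {m m' a : ℕ} (b : ℕ) (h : min (min m a) b = min (min m' a) b) :
    truncMap R m a b = truncMap R m' a b := by
  refine LinearMap.ext fun x => funext fun q => ?_
  have hq := q.2
  simp only [truncMap_apply]
  by_cases hm : (q : ℕ) < min m a
  · rw [dif_pos hm, dif_pos (by omega)]
  · rw [dif_neg hm, dif_neg (by omega)]

lemma truncMap_self (a : ℕ) : truncMap R a a a = LinearMap.id := by
  refine LinearMap.ext fun x => funext fun q => ?_
  simp [truncMap_apply]

lemma truncMap_comp_truncMap (m m' a b c : ℕ) :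
    truncMap R m' b c ∘ₗ truncMap R m a b = truncMap R (min m (min m' b)) a c := by
  refine LinearMap.ext fun x => funext fun q => ?_
  simp only [LinearMap.comp_apply, truncMap_apply]
  by_cases h1 : (q : ℕ) < min m' b
  · rw [dif_pos h1]
    by_cases h2 : (q : ℕ) < min m a
    · rw [dif_pos h2, dif_pos (by omega)]
    · rw [dif_neg h2, dif_neg (by omega)]
  · rw [dif_neg h1, dif_neg (by omega)]

lemma truncMap_surjective {a b : ℕ} (h : b ≤ a) : Function.Surjective (truncMap R a a b) := by
  intro y
  refine ⟨fun r => if h : (r : ℕ) < b then y ⟨r, h⟩ else 0, funext fun q => ?_⟩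
  rw [truncMap_apply, dif_pos (by omega)]
  exact dif_pos q.2

lemma truncMap_injective {a b : ℕ} (h : a ≤ b) : Function.Injective (truncMap R a a b) := by
  intro x y hxy
  funext r
  have := congrFun hxy ⟨r, r.2.trans_le h⟩
  simpa [truncMap_apply] using this

lemma finrank_range_truncMap (K : Type*) [DivisionRing K] (m a b : ℕ) :
    finrank K (range (truncMap K m a b)) = min m (min a b) := by
  set k := min m (min a b)
  have hfactor : truncMap K m a b = truncMap K k k b ∘ₗ truncMap K a a k := by
    rw [truncMap_comp_truncMap]
    exact truncMap_congr b (by omega)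
  rw [hfactor, range_comp_of_range_eq_top _ (range_eq_top.mpr (truncMap_surjective (by omega))),
    finrank_range_of_inj (truncMap_injective (by omega)), finrank_fin_fun]

lemma rectMap_eq_truncMap (K : Type) [Field K] (a b : ℕ) : rectMap K a b = truncMap K a a b := by
  refine LinearMap.ext fun x => funext fun q => ?_
  simp only [rectMap, Matrix.mulVecLin_apply, Matrix.mulVec, dotProduct, Matrix.of_apply,
    truncMap_apply, min_self, ite_mul, one_mul, zero_mul]
  split_ifs with h
  · rw [Fintype.sum_eq_single ⟨q, h⟩ fun i hi => if_neg fun hq => hi (Fin.ext hq.symm), if_pos rfl]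
  · exact sum_eq_zero fun i _ => if_neg fun (hq : (q : ℕ) = i) => h (hq ▸ i.2)

end TruncMap

lemma finrank_range_piMap (K : Type*) [DivisionRing K] {ι : Type*} [Fintype ι]
    {M N : ι → Type*} [∀ p, AddCommGroup (M p)] [∀ p, Module K (M p)]
    [∀ p, AddCommGroup (N p)] [∀ p, Module K (N p)] [∀ p, FiniteDimensional K (N p)]
    (f : ∀ p, M p →ₗ[K] N p) :
    finrank K (range (piMap f)) = ∑ p, finrank K (range (f p)) := by
  have hfactor : piMap f = piMap (fun p => (range (f p)).subtype) ∘ₗ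
      piMap (fun p => (f p).rangeRestrict) := rfl
  rw [hfactor, range_comp_of_range_eq_top _
      (range_eq_top.mpr (Function.Surjective.piMap fun p => (f p).surjective_rangeRestrict)),
    finrank_range_of_inj (Function.Injective.piMap fun p => Subtype.val_injective),
    finrank_pi_fintype]

section RigidRep

variable {d : ℕ → ℤ}

/-- The rank of the component of `V_i → V_j` on the summand `U_p^{m_p}`. -/
noncomputable def coverMult (d : ℕ → ℤ) (i j : ℕ) (p : ℕ × ℕ) : ℕ :=
  if p.1 ≤ i ∧ j ≤ p.2 then rigidMult d p.1 p.2 else 0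

lemma coverMult_le_compDim {i j l : ℕ} (hil : i ≤ l) (hlj : l ≤ j) (p : ℕ × ℕ) :
    coverMult d i j p ≤ compDim d l p := by
  unfold coverMult compDim
  split_ifs <;> omega

lemma sum_coverMult {n i j : ℕ} (hij : i ≤ j) :
    ∑ p ∈ Icc 1 n ×ˢ Icc 1 n, coverMult d i j p = ∑ a ∈ Icc 1 i, ∑ b ∈ Icc j n, rigidMult d a b := by
  have hcover : (Icc 1 n ×ˢ Icc 1 n).filter (fun p : ℕ × ℕ => p.1 ≤ i ∧ j ≤ p.2) =
      Icc 1 i ×ˢ Icc j n := by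
    ext ⟨a, b⟩
    simp only [mem_filter, mem_product, mem_Icc]
    omega
  rw [← sum_product', ← hcover, sum_filter]
  rfl

end RigidRep

section RigidComp

variable {K : Type} [Field K] {n : ℕ} {d : ℕ → ℤ}
  {g : ∀ i j, rigidSpace K n d i →ₗ[K] rigidSpace K n d j}

lemma rigid_comp_eq_piMap_truncMap (hgi : ∀ i, g i i = LinearMap.id)
    (hgs : ∀ i j, i ≤ j → g i (j + 1) = (rigidStructMap K n d j).comp (g i j))
    {i j : ℕ} (hij : i ≤ j) :
    g i j = piMap fun p : ↥(Icc 1 n ×ˢ Icc 1 n) =>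
      truncMap K (coverMult d i j p) (compDim d i p) (compDim d j p) := by
  induction j, hij using Nat.le_induction with
  | base => exact (hgi i).trans (by simp only [coverMult, compDim, truncMap_self]; rfl)
  | succ j hij ih =>
    rw [hgs i j hij, ih]
    refine LinearMap.ext fun x => funext fun p => ?_
    change (rectMap K _ _ ∘ₗ truncMap K _ _ _) (x p) = truncMap K _ _ _ (x p)
    rw [rectMap_eq_truncMap, truncMap_comp_truncMap]
    refine congrArg (· (x p)) (truncMap_congr _ ?_)
    unfold coverMult compDim
    split_ifs <;> omega

lemma finrank_range_rigid_comp (hgi : ∀ i, g i i = LinearMap.id)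
    (hgs : ∀ i j, i ≤ j → g i (j + 1) = (rigidStructMap K n d j).comp (g i j))
    {i j : ℕ} (hij : i ≤ j) :
    finrank K (range (g i j)) = ∑ p : ↥(Icc 1 n ×ˢ Icc 1 n), coverMult d i j p := by
  rw [rigid_comp_eq_piMap_truncMap hgi hgs hij]
  refine (finrank_range_piMap K _).trans (sum_congr rfl fun p _ => ?_)
  have hi := coverMult_le_compDim le_rfl hij (d := d) p
  have hj := coverMult_le_compDim hij le_rfl (d := d) p
  rw [finrank_range_truncMap]
  omega

end RigidComp

theorem rigid_rep_rank_eq_min_general (K : Type) [Field K] (n : ℕ) (d : ℕ → ℤ)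
    (hd : ∀ i, 0 ≤ d i) (h0 : d 0 = 0) (hn : d (n + 1) = 0)
    (g : ∀ i j, rigidSpace K n d i →ₗ[K] rigidSpace K n d j)
    (hgi : ∀ i, g i i = LinearMap.id)
    (hgs : ∀ i j, i ≤ j → g i (j + 1) = (rigidStructMap K n d j).comp (g i j))
    (i j : ℕ) (hij : i ≤ j) (hjn : j ≤ n) :
    (Module.finrank K (LinearMap.range (g i j)) : ℤ) =
      (Finset.Icc i j).inf' (Finset.nonempty_Icc.mpr hij) d := by
  rw [finrank_range_rigid_comp hgi hgs hij, sum_coe_sort _ (fun p => coverMult d i j p),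
    sum_coverMult hij]
  push_cast
  rw [sum_rigidMult hd h0 hn hij hjn, intervalMin_of_le hij]

/-- The representation `V = ⊕ U_{i,j}^{m_{ij}}` built from the piecewise-linear formula for
the rigid representation of the equioriented `Aₙ` quiver attains the maximal ranks: the
composition `V_i → V_j` (encoded by `g` with `g i i = id`, `g i (j+1) = f j ∘ g i j`) has
rank `min {d_i, …, d_j}` for all `1 ≤ i ≤ j ≤ n`. -/
theorem rigid_rep_rank_eq_min (K : Type) [Field K] (n : ℕ) (d : ℕ → ℤ)
    (hd : ∀ i, 0 ≤ d i) (h0 : d 0 = 0) (hn : d (n + 1) = 0)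
    (g : ∀ i j, rigidSpace K n d i →ₗ[K] rigidSpace K n d j)
    (hgi : ∀ i, g i i = LinearMap.id)
    (hgs : ∀ i j, i ≤ j → g i (j + 1) = (rigidStructMap K n d j).comp (g i j))
    (i j : ℕ) (h1 : 1 ≤ i) (hij : i ≤ j) (hjn : j ≤ n) :
    (Module.finrank K (LinearMap.range (g i j)) : ℤ) =
      (Finset.Icc i j).inf' (Finset.nonempty_Icc.mpr hij) d :=
  rigid_rep_rank_eq_min_general K n d hd h0 hn g hgi hgs i j hij hjn
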